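/- Let Φ and Ψ be stationary random measures on a common probability space (Ω,𝓕,P) with ergodic P and positive finite intensities λ_Φ, λ_Ψ, and let F be a flow-adapted jointly measurable map such that P-almost surely F(ω,·,·) is a stable constrained density for (Φ(ω), Ψ(ω)). If λ_Φ < λ_Ψ, then P-almost surely the set of F(ω)-unexhausted sites has Φ(ω)-measure zero while the set of F(ω)-unsated centers has infinite Ψ(ω)-measure. Symmetrically, if λ_Φ > λ_Ψ, then P-almost surely the set of F(ω)-unsated centers has Ψ(ω)-measure zero while the set of F(ω)-unexhausted sites has infinite Φ(ω)-measure. -/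

import Mathlib

open MeasureTheory Filter Metric Bornology
open scoped ENNReal NNReal Topology

noncomputable section

attribute [local instance] Classical.propDecidable

/-- Euclidean space `ℝ^d`. -/
abbrev Rd (d : ℕ) : Type := EuclideanSpace ℝ (Fin d)

/-- Locally finite: finite on bounded sets. -/
def LocFin {d : ℕ} (μ : Measure (Rd d)) : Prop :=
  ∀ s : Set (Rd d), IsBounded s → μ s < ⊤

/-- A sub-balancing density for `(φ, ψ)`. -/
def IsSubBalancing {d : ℕ} (φ ψ : Measure (Rd d)) (f : Rd d → Rd d → ℝ) : Prop :=
  Measurable (Function.uncurry f) ∧ (∀ x ξ, 0 ≤ f x ξ) ∧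
  (∀ x, ∫⁻ ξ, ENNReal.ofReal (f x ξ) ∂ψ ≤ 1) ∧
  (∀ ξ, ∫⁻ x, ENNReal.ofReal (f x ξ) ∂φ ≤ 1)

/-- A balancing density for `(φ, ψ)`. -/
def IsBalancing {d : ℕ} (φ ψ : Measure (Rd d)) (f : Rd d → Rd d → ℝ) : Prop :=
  IsSubBalancing φ ψ f ∧
  (∀ᵐ x ∂φ, ∫⁻ ξ, ENNReal.ofReal (f x ξ) ∂ψ = 1) ∧
  (∀ᵐ ξ ∂ψ, ∫⁻ x, ENNReal.ofReal (f x ξ) ∂φ = 1)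

/-- A constrained density for `(φ, ψ)`. -/
def IsConstrainedDensity {d : ℕ} (φ ψ : Measure (Rd d)) (f : Rd d → Rd d → ℝ) : Prop :=
  IsSubBalancing φ ψ f ∧ ∀ x ξ, f x ξ ≤ 1

/-- The site `x` is `f`-unexhausted. -/
def Unexhausted {d : ℕ} (ψ : Measure (Rd d)) (f : Rd d → Rd d → ℝ) (x : Rd d) : Prop :=
  ∫⁻ ξ, ENNReal.ofReal (f x ξ) ∂ψ < 1

/-- The center `ξ` is `f`-unsated. -/
def Unsated {d : ℕ} (φ : Measure (Rd d)) (f : Rd d → Rd d → ℝ) (ξ : Rd d) : Prop :=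
  ∫⁻ x, ENNReal.ofReal (f x ξ) ∂φ < 1

/-- The site `x₀` `f`-desires the center `ξ₀`. -/
def SiteDesires {d : ℕ} (ψ : Measure (Rd d)) (f : Rd d → Rd d → ℝ) (x₀ ξ₀ : Rd d) : Prop :=
  f x₀ ξ₀ < 1 ∧ (Unexhausted ψ f x₀ ∨ ∃ ξ₁, dist x₀ ξ₀ < dist x₀ ξ₁ ∧ 0 < f x₀ ξ₁)

/-- The center `ξ₀` `f`-desires the site `x₀`. -/
def CenterDesires {d : ℕ} (φ : Measure (Rd d)) (f : Rd d → Rd d → ℝ) (x₀ ξ₀ : Rd d) : Prop :=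
  f x₀ ξ₀ < 1 ∧ (Unsated φ f ξ₀ ∨ ∃ x₁, dist x₀ ξ₀ < dist x₁ ξ₀ ∧ 0 < f x₁ ξ₀)

/-- A stable constrained density for `(φ, ψ)`. -/
def IsStableDensity {d : ℕ} (φ ψ : Measure (Rd d)) (f : Rd d → Rd d → ℝ) : Prop :=
  IsConstrainedDensity φ ψ f ∧
  ¬∃ x₀ ξ₀, SiteDesires ψ f x₀ ξ₀ ∧ CenterDesires φ f x₀ ξ₀

/-- Application radius given previous rejection function `Rp`. -/
def appRad {d : ℕ} (ψ : Measure (Rd d)) (Rp : Rd d → Rd d → ℝ) (x : Rd d) : ℝ≥0∞ :=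
  sSup (ENNReal.ofReal '' {a : ℝ | 0 ≤ a ∧
    ∫⁻ ξ in closedBall x a, ENNReal.ofReal (1 - Rp x ξ) ∂ψ ≤ 1})

/-- The boundary weight `c` in the application step. -/
def appC {d : ℕ} (ψ : Measure (Rd d)) (Rp : Rd d → Rd d → ℝ) (x : Rd d) : ℝ :=
  if appRad ψ Rp x ≠ ⊤ ∧
      0 < ∫⁻ ξ in sphere x (appRad ψ Rp x).toReal, ENNReal.ofReal (1 - Rp x ξ) ∂ψ then
    1 - (1 - (∫⁻ ξ in ball x (appRad ψ Rp x).toReal, ENNReal.ofReal (1 - Rp x ξ) ∂ψ).toReal) /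
      (∫⁻ ξ in sphere x (appRad ψ Rp x).toReal, ENNReal.ofReal (1 - Rp x ξ) ∂ψ).toReal
  else 1

/-- The application function built from the previous rejection function `Rp`. -/
def appFun {d : ℕ} (ψ : Measure (Rd d)) (Rp : Rd d → Rd d → ℝ) (x ξ : Rd d) : ℝ :=
  if ENNReal.ofReal (dist x ξ) < appRad ψ Rp x then 1
  else if ENNReal.ofReal (dist x ξ) = appRad ψ Rp x then
    appC ψ Rp x * Rp x ξ + (1 - appC ψ Rp x)
  else 0

/-- Rejection radius given the current application function `A`. -/
def rejRad {d : ℕ} (φ : Measure (Rd d)) (A : Rd d → Rd d → ℝ) (ξ : Rd d) : ℝ≥0∞ :=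
  sSup (ENNReal.ofReal '' {r : ℝ | 0 ≤ r ∧
    ∫⁻ x in closedBall ξ r, ENNReal.ofReal (A x ξ) ∂φ ≤ 1})

/-- The boundary weight `c′` in the rejection step. -/
def rejC {d : ℕ} (φ : Measure (Rd d)) (A : Rd d → Rd d → ℝ) (ξ : Rd d) : ℝ :=
  if rejRad φ A ξ ≠ ⊤ ∧
      0 < ∫⁻ x in sphere ξ (rejRad φ A ξ).toReal, ENNReal.ofReal (A x ξ) ∂φ then
    1 - (1 - (∫⁻ x in ball ξ (rejRad φ A ξ).toReal, ENNReal.ofReal (A x ξ) ∂φ).toReal) /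
      (∫⁻ x in sphere ξ (rejRad φ A ξ).toReal, ENNReal.ofReal (A x ξ) ∂φ).toReal
  else 0

/-- The rejection function built from the current application function `A`. -/
def rejFun {d : ℕ} (φ : Measure (Rd d)) (A : Rd d → Rd d → ℝ) (x ξ : Rd d) : ℝ :=
  if ENNReal.ofReal (dist x ξ) < rejRad φ A ξ then 0
  else if ENNReal.ofReal (dist x ξ) = rejRad φ A ξ then rejC φ A ξ * A x ξ
  else A x ξ

/-- `GS_R φ ψ n` is the rejection function `Rₙ` of the site-optimal Gale–Shapley
algorithm (so `GS_R φ ψ 0 = R₀ = 0`). -/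
def GS_R {d : ℕ} (φ ψ : Measure (Rd d)) : ℕ → Rd d → Rd d → ℝ
  | 0 => fun _ _ => 0
  | n + 1 => rejFun φ (appFun ψ (GS_R φ ψ n))

/-- `GS_A φ ψ n` is the application function `Aₙ₊₁` (the one built from `Rₙ`). -/
def GS_A {d : ℕ} (φ ψ : Measure (Rd d)) (n : ℕ) : Rd d → Rd d → ℝ :=
  appFun ψ (GS_R φ ψ n)

/-- `GS_a φ ψ n` is the application radius `aₙ₊₁`. -/
def GS_a {d : ℕ} (φ ψ : Measure (Rd d)) (n : ℕ) : Rd d → ℝ≥0∞ :=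
  appRad ψ (GS_R φ ψ n)

/-- `GS_r φ ψ n` is the rejection radius `rₙ₊₁`. -/
def GS_r {d : ℕ} (φ ψ : Measure (Rd d)) (n : ℕ) : Rd d → ℝ≥0∞ :=
  rejRad φ (GS_A φ ψ n)

/-- The limiting application function `A = limₙ Aₙ` (a monotone limit, hence a `⨆`). -/
def GS_Alim {d : ℕ} (φ ψ : Measure (Rd d)) (x ξ : Rd d) : ℝ := ⨆ n, GS_A φ ψ n x ξ

/-- The limiting rejection function `R = limₙ Rₙ` (a monotone limit, hence a `⨆`). -/
def GS_Rlim {d : ℕ} (φ ψ : Measure (Rd d)) (x ξ : Rd d) : ℝ := ⨆ n, GS_R φ ψ n x ξ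

/-- The site-optimal density `f_s = A − R` for `(φ, ψ)`. -/
def siteOptimal {d : ℕ} (φ ψ : Measure (Rd d)) (x ξ : Rd d) : ℝ :=
  GS_Alim φ ψ x ξ - GS_Rlim φ ψ x ξ

/-- The center-optimal density for `(φ, ψ)`. -/
def centerOptimal {d : ℕ} (φ ψ : Measure (Rd d)) (x ξ : Rd d) : ℝ :=
  siteOptimal ψ φ ξ x

/-- Assumption U. -/
def AssumptionU {d : ℕ} (φ ψ : Measure (Rd d)) : Prop :=
  (∀ᵐ x ∂φ, ∀ r : ℝ, 0 < r → ∃ s ∈ sphere x r, ψ (sphere x r \ {s}) = 0) ∧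
  (∀ᵐ ξ ∂ψ, ∀ r : ℝ, 0 < r → ∃ s ∈ sphere ξ r, φ (sphere ξ r \ {s}) = 0)

/-- A measurable flow on `Ω`. -/
def IsMeasurableFlow {Ω : Type*} [MeasurableSpace Ω] {d : ℕ} (θ : Rd d → Ω → Ω) : Prop :=
  Measurable (fun p : Rd d × Ω => θ p.1 p.2) ∧ θ 0 = id ∧
  ∀ s t : Rd d, θ s ∘ θ t = θ (s + t)

/-- `P` is invariant under the flow `θ`. -/
def IsFlowInvariant {Ω : Type*} [MeasurableSpace Ω] {d : ℕ} (θ : Rd d → Ω → Ω)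
    (P : Measure Ω) : Prop :=
  ∀ s, Measure.map (θ s) P = P

/-- `P` is ergodic for the flow `θ`. -/
def IsErgodicFlow {Ω : Type*} [MeasurableSpace Ω] {d : ℕ} (θ : Rd d → Ω → Ω)
    (P : Measure Ω) : Prop :=
  ∀ A : Set Ω, MeasurableSet A → (∀ s, θ s ⁻¹' A = A) → P A = 0 ∨ P A = 1

/-- A random measure: measurable and everywhere locally finite. -/
def IsRandomMeasure {Ω : Type*} [MeasurableSpace Ω] {d : ℕ} (Φ : Ω → Measure (Rd d)) : Prop :=
  (∀ B : Set (Rd d), MeasurableSet B → Measurable fun ω => Φ ω B) ∧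
  (∀ ω, LocFin (Φ ω))

/-- The random measure `Φ` is flow-adapted. -/
def FlowAdaptedMeasure {Ω : Type*} [MeasurableSpace Ω] {d : ℕ} (θ : Rd d → Ω → Ω)
    (Φ : Ω → Measure (Rd d)) : Prop :=
  ∀ ω s (B : Set (Rd d)), MeasurableSet B → Φ (θ s ω) B = Φ ω ((fun b => b + s) '' B)

/-- `Φ` has intensity `lam`. -/
def HasIntensity {Ω : Type*} [MeasurableSpace Ω] {d : ℕ} (P : Measure Ω)
    (Φ : Ω → Measure (Rd d)) (lam : ℝ≥0∞) : Prop :=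
  ∀ B : Set (Rd d), MeasurableSet B → ∫⁻ ω, Φ ω B ∂P = lam * volume B

/-- A flow-adapted jointly measurable function `F : Ω × ℝ^d × ℝ^d → ℝ`. -/
def FlowAdaptedKernel {Ω : Type*} [MeasurableSpace Ω] {d : ℕ} (θ : Rd d → Ω → Ω)
    (F : Ω → Rd d → Rd d → ℝ) : Prop :=
  Measurable (fun p : Ω × Rd d × Rd d => F p.1 p.2.1 p.2.2) ∧
  ∀ ω s x ξ, F (θ s ω) x ξ = F ω (x + s) (ξ + s)

/-- The shift `θ_t μ` of a measure: `(θ_t μ)(B) = μ(B + t)`. -/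
def shiftMeasure {d : ℕ} (t : Rd d) (μ : Measure (Rd d)) : Measure (Rd d) :=
  Measure.map (fun x => x - t) μ

/-- `s(x)` of the Voronoi transport kernel. -/
def vRad {d : ℕ} (ψ : Measure (Rd d)) (x : Rd d) : ℝ≥0∞ :=
  sSup (ENNReal.ofReal '' {s : ℝ | 0 ≤ s ∧ ψ (closedBall x s) ≤ 1})

/-- The boundary weight `c(x)` of the Voronoi density. -/
def vC {d : ℕ} (ψ : Measure (Rd d)) (x : Rd d) : ℝ :=
  if vRad ψ x ≠ ⊤ ∧ 0 < ψ (sphere x (vRad ψ x).toReal) then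
    (1 - (ψ (ball x (vRad ψ x).toReal)).toReal) / (ψ (sphere x (vRad ψ x).toReal)).toReal
  else 1

/-- The Voronoi density with respect to `ψ`. -/
def voronoiDensity {d : ℕ} (ψ : Measure (Rd d)) (x ξ : Rd d) : ℝ :=
  if ENNReal.ofReal (dist x ξ) < vRad ψ x then 1
  else if ENNReal.ofReal (dist x ξ) = vRad ψ x then vC ψ x
  else 0

/-- The Voronoi territory of `ξ` with respect to `ψ`. -/
def voronoiTerritory {d : ℕ} (ψ : Measure (Rd d)) (ξ : Rd d) : Set (Rd d) :=
  {x | 0 < voronoiDensity ψ x ξ}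

/-- The (topological) support of a measure. -/
def msupport {d : ℕ} (ψ : Measure (Rd d)) : Set (Rd d) := {x | ∀ U ∈ 𝓝 x, 0 < ψ U}

/-!
Let `g ω` be the `Ψ ω`-mass of the unsated centres. It is shift-invariant, so by ergodicity
each of the events `g = 0` and `g < ∞` has probability `0` or `1`.
If `g = 0` almost surely, almost every centre is sated, and the mass transport principle over
a lattice fundamental domain `D` gives `λ_Ψ vol D ≤ 𝔼 ∫_D (mass received) dΨ
= 𝔼 ∫_D (mass sent) dΦ ≤ λ_Φ vol D`, contradicting `λ_Φ < λ_Ψ`.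
If `g < ∞` almost surely, the expected (truncated) unsated mass in a ball does not depend on
the centre of the ball but tends to `0` as the ball is moved to infinity, so `g = 0` almost
surely, which was just excluded. Hence `g = ∞` almost surely. By stability an unexhausted site
`x` satisfies `F ω x ξ = 1` at every unsated centre `ξ`, so it would send infinite mass; thus
there are no unexhausted sites. The case `λ_Ψ < λ_Φ` follows by exchanging sites and centres.
-/

namespace ProbabilityTheory.Kernel

variable {α β : Type*} [MeasurableSpace α] [MeasurableSpace β] {κ : Kernel α β}

theorem isSFiniteKernel_of_isFiniteMeasure (h : ∀ a, IsFiniteMeasure (κ a)) :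
    IsSFiniteKernel κ := by
  set D := disjointed fun n : ℕ => {a | κ a Set.univ < n}
  have hD : ∀ n, MeasurableSet (D n) := MeasurableSet.disjointed fun n =>
    measurableSet_lt (κ.measurable_coe MeasurableSet.univ) measurable_const
  have hfin (n : ℕ) : IsFiniteKernel (piecewise (hD n) κ 0) :=
    ⟨⟨n, ENNReal.natCast_lt_top n, fun a => by
      rw [piecewise_apply]
      split_ifs with ha
      · exact (disjointed_subset _ n ha).le
      · simp⟩⟩
  suffices κ = Kernel.sum fun n => piecewise (hD n) κ 0 by
    rw [this]; exact isSFiniteKernel_sum (hκs := fun n => inferInstance)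
  ext a s -
  obtain ⟨n, hn⟩ : ∃ n, a ∈ D n := by
    rw [← Set.mem_iUnion, iUnion_disjointed]
    exact Set.mem_iUnion.2 (ENNReal.exists_nat_gt (measure_ne_top (κ a) Set.univ))
  rw [sum_apply, Measure.sum_apply_of_countable, tsum_eq_single n, piecewise_apply, if_pos hn]
  intro m hm
  rw [piecewise_apply, if_neg fun hm' => Set.disjoint_left.1 (disjoint_disjointed _ hm) hm' hn]
  rfl

theorem isSFiniteKernel_of_iUnion {s : ℕ → Set β} (hs : ∀ n, MeasurableSet (s n))
    (hcover : ⋃ n, s n = Set.univ) (hfin : ∀ a n, κ a (s n) ≠ ∞) : IsSFiniteKernel κ := by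
  have hD : ∀ n, MeasurableSet (disjointed s n) := MeasurableSet.disjointed hs
  have hpiece : ∀ n, IsSFiniteKernel (κ.restrict (hD n)) := fun n =>
    isSFiniteKernel_of_isFiniteMeasure fun a => by
      rw [restrict_apply]
      exact ⟨by simpa using (measure_mono (disjointed_subset s n)).trans_lt (hfin a n).lt_top⟩
  suffices κ = Kernel.sum fun n => κ.restrict (hD n) by
    rw [this]; exact isSFiniteKernel_sum (hκs := hpiece)
  ext a : 1
  simp_rw [sum_apply, restrict_apply]
  rw [← Measure.restrict_iUnion (disjoint_disjointed s) hD, iUnion_disjointed, hcover,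
    Measure.restrict_univ]

end ProbabilityTheory.Kernel

open ProbabilityTheory Function

theorem tsum_indicator_vadd_eq_one {G E : Type*} [VAdd G E] {D : Set E}
    (hD : ∀ x, ∃! g : G, g +ᵥ x ∈ D) (x : E) :
    ∑' g : G, D.indicator (1 : E → ℝ≥0∞) (g +ᵥ x) = 1 := by
  obtain ⟨g₀, hg₀, huniq⟩ := hD x
  rw [tsum_eq_single g₀ fun g hg => Set.indicator_of_notMem (fun h => hg (huniq g h)) _,
    Set.indicator_of_mem hg₀, Pi.one_apply]

section Product

variable {α β : Type*} [MeasurableSpace α] [MeasurableSpace β] {μ : Measure α} {ν : Measure β}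
  {f : α → β → ℝ≥0∞}

theorem setLIntegral_lintegral_eq_lintegral_prod [SFinite ν] {D : Set α} (hD : MeasurableSet D)
    (hf : Measurable (uncurry f)) :
    ∫⁻ x in D, ∫⁻ y, f x y ∂ν ∂μ = ∫⁻ p, D.indicator 1 p.1 * f p.1 p.2 ∂μ.prod ν := by
  have hm : Measurable fun p : α × β => D.indicator 1 p.1 * f p.1 p.2 :=
    ((measurable_const.indicator hD).comp measurable_fst).mul hf
  rw [lintegral_prod _ hm.aemeasurable, ← lintegral_indicator hD]
  congr with x
  by_cases hx : x ∈ D <;> simp [hx]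

theorem setLIntegral_lintegral_eq_lintegral_prod_symm [SFinite μ] [SFinite ν] {D : Set β}
    (hD : MeasurableSet D) (hf : Measurable (uncurry f)) :
    ∫⁻ y in D, ∫⁻ x, f x y ∂μ ∂ν = ∫⁻ p, D.indicator 1 p.2 * f p.1 p.2 ∂μ.prod ν := by
  have hm : Measurable fun p : α × β => D.indicator 1 p.2 * f p.1 p.2 :=
    ((measurable_const.indicator hD).comp measurable_snd).mul hf
  rw [lintegral_prod_symm _ hm.aemeasurable, ← lintegral_indicator hD]
  congr with y
  by_cases hy : y ∈ D <;> simp [hy]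

end Product

theorem tendsto_measure_ball_of_norm_ge {E : Type*} [NormedAddCommGroup E]
    [MeasurableSpace E] [OpensMeasurableSpace E] {μ : Measure E} [IsFiniteMeasure μ]
    {c : ℕ → E} {r : ℝ} (hc : ∀ n, n + r ≤ ‖c n‖) :
    Tendsto (fun n => μ (ball (c n) r)) atTop (𝓝 0) := by
  have hfar (n : ℕ) : ball (c n) r ⊆ (ball 0 n)ᶜ := fun y hy => by
    rw [mem_ball, dist_eq_norm, norm_sub_rev] at hy
    simp only [Set.mem_compl_iff, mem_ball, dist_zero_right, not_lt]
    linarith [hc n, norm_sub_norm_le (c n) y]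
  have htail : Tendsto (fun n : ℕ => μ (ball (0 : E) n)ᶜ) atTop (𝓝 0) := by
    have := tendsto_measure_iInter_atTop (μ := μ) (s := fun n : ℕ => (ball (0 : E) n)ᶜ)
      (fun n => measurableSet_ball.compl.nullMeasurableSet)
      (fun m n hmn => Set.compl_subset_compl.2 (ball_subset_ball (by exact_mod_cast hmn)))
      ⟨0, measure_ne_top μ _⟩
    rwa [← Set.compl_iUnion, iUnion_ball_nat, Set.compl_univ, measure_empty] at this
  exact tendsto_of_tendsto_of_tendsto_of_le_of_le tendsto_const_nhds htail (fun _ => zero_le)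
    fun n => measure_mono (hfar n)

section Stability

variable {d : ℕ} {φ ψ : Measure (Rd d)} {f : Rd d → Rd d → ℝ}

theorem IsStableDensity.not_unexhausted_of_measure_unsated_eq_top (h : IsStableDensity φ ψ f)
    (htop : ψ {ξ | Unsated φ f ξ} = ∞) (x : Rd d) : ¬ Unexhausted ψ f x := by
  intro hx
  have hsat : {ξ | Unsated φ f ξ} ⊆ {ξ | 1 ≤ ENNReal.ofReal (f x ξ)} := fun ξ hξ => by
    by_contra hge
    have hlt : f x ξ < 1 := by simpa using hge
    exact h.2 ⟨x, ξ, ⟨hlt, Or.inl hx⟩, ⟨hlt, Or.inl hξ⟩⟩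
  have hmarkov := mul_meas_ge_le_lintegral₀ (μ := ψ)
    (h.1.1.1.of_uncurry_left (x := x)).ennreal_ofReal.aemeasurable 1
  rw [one_mul] at hmarkov
  have hinf : ∞ ≤ ∫⁻ ξ, ENNReal.ofReal (f x ξ) ∂ψ := htop ▸ (measure_mono hsat).trans hmarkov
  exact not_top_lt (hinf.trans_lt hx)

theorem IsStableDensity.swap (h : IsStableDensity φ ψ f) :
    IsStableDensity ψ φ fun x ξ => f ξ x := by
  obtain ⟨⟨⟨hm, h0, hsite, hcenter⟩, h1⟩, hst⟩ := h
  refine ⟨⟨⟨hm.comp measurable_swap, fun x ξ => h0 ξ x, hcenter, hsite⟩, fun x ξ => h1 ξ x⟩, ?_⟩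
  rintro ⟨ξ₀, x₀, ⟨hlt, hs⟩, ⟨-, hc⟩⟩
  refine hst ⟨x₀, ξ₀, ⟨hlt, ?_⟩, ⟨hlt, ?_⟩⟩
  · simp only [dist_comm] at hc ⊢
    exact hc
  · simp only [dist_comm] at hs ⊢
    exact hs

end Stability

section RandomMeasures

variable {Ω : Type*} [MeasurableSpace Ω] {d : ℕ}

theorem LocFin.sigmaFinite {μ : Measure (Rd d)} (h : LocFin μ) : SigmaFinite μ :=
  ⟨⟨⟨fun n => ball 0 n, fun _ => trivial, fun _ => h _ isBounded_ball, iUnion_ball_nat 0⟩⟩⟩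

namespace IsRandomMeasure

variable {Φ : Ω → Measure (Rd d)}

def kernel (hΦ : IsRandomMeasure Φ) : Kernel Ω (Rd d) :=
  ⟨Φ, Measure.measurable_of_measurable_coe _ hΦ.1⟩

theorem kernel_apply (hΦ : IsRandomMeasure Φ) (ω : Ω) : hΦ.kernel ω = Φ ω := rfl

instance isSFiniteKernel_kernel (hΦ : IsRandomMeasure Φ) : IsSFiniteKernel hΦ.kernel :=
  Kernel.isSFiniteKernel_of_iUnion (fun _ => measurableSet_ball) (iUnion_ball_nat 0)
    fun ω _ => (hΦ.2 ω _ isBounded_ball).ne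

theorem measurable_lintegral {α : Type*} [MeasurableSpace α] (hΦ : IsRandomMeasure Φ)
    {g : α → Ω} (hg : Measurable g) {f : α → Rd d → ℝ≥0∞} (hf : Measurable (uncurry f)) :
    Measurable fun a => ∫⁻ x, f a x ∂Φ (g a) :=
  hf.lintegral_kernel_prod_right (κ := hΦ.kernel.comap g hg)

theorem measurable_measure_prodMk_left (hΦ : IsRandomMeasure Φ) {t : Set (Ω × Rd d)}
    (ht : MeasurableSet t) : Measurable fun ω => Φ ω (Prod.mk ω ⁻¹' t) :=
  Kernel.measurable_kernel_prodMk_left (κ := hΦ.kernel) ht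

theorem measurable_lintegral_prod {Ψ : Ω → Measure (Rd d)} (hΦ : IsRandomMeasure Φ)
    (hΨ : IsRandomMeasure Ψ) {H : Ω → Rd d × Rd d → ℝ≥0∞} (hH : Measurable (uncurry H)) :
    Measurable fun ω => ∫⁻ p, H ω p ∂(Φ ω).prod (Ψ ω) := by
  simpa only [Kernel.prod_apply, kernel_apply] using
    hH.lintegral_kernel_prod_right (κ := hΦ.kernel ×ₖ hΨ.kernel)

end IsRandomMeasure

variable {θ : Rd d → Ω → Ω} {P : Measure Ω}

theorem IsMeasurableFlow.measurable (hflow : IsMeasurableFlow θ) (s : Rd d) :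
    Measurable (θ s) :=
  hflow.1.comp (measurable_const.prodMk measurable_id)

theorem IsFlowInvariant.lintegral_comp (hinv : IsFlowInvariant θ P) (hflow : IsMeasurableFlow θ)
    (s : Rd d) {G : Ω → ℝ≥0∞} (hG : Measurable G) :
    ∫⁻ ω, G (θ s ω) ∂P = ∫⁻ ω, G ω ∂P := by
  rw [← lintegral_map hG (hflow.measurable s), hinv s]

theorem IsErgodicFlow.ae_or_ae_not [IsProbabilityMeasure P] (herg : IsErgodicFlow θ P)
    {p : Ω → Prop} (hp : MeasurableSet {ω | p ω}) (hinv : ∀ s ω, p (θ s ω) ↔ p ω) :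
    (∀ᵐ ω ∂P, p ω) ∨ ∀ᵐ ω ∂P, ¬ p ω := by
  rcases herg _ hp fun s => Set.ext (hinv s) with h | h
  · exact Or.inr (measure_eq_zero_iff_ae_notMem.1 h)
  · exact Or.inl ((ae_iff_measure_eq hp.nullMeasurableSet).2 (h.trans measure_univ.symm))

theorem FlowAdaptedMeasure.eq_shiftMeasure {Φ : Ω → Measure (Rd d)}
    (hΦa : FlowAdaptedMeasure θ Φ) (ω : Ω) (s : Rd d) :
    Φ (θ s ω) = shiftMeasure s (Φ ω) := by
  ext B hB
  rw [shiftMeasure, Measure.map_apply (measurable_sub_const s) hB, hΦa ω s B hB,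
    Set.image_add_right]
  simp only [sub_eq_add_neg]

theorem FlowAdaptedMeasure.measure_flow_inter {Ψ : Ω → Measure (Rd d)}
    (hΨa : FlowAdaptedMeasure θ Ψ) {U : Ω → Set (Rd d)}
    (hU : MeasurableSet {p : Ω × Rd d | p.2 ∈ U p.1})
    (hUa : ∀ ω s, U (θ s ω) = (· + s) ⁻¹' U ω) (ω : Ω) (s : Rd d) {V : Set (Rd d)}
    (hV : MeasurableSet V) :
    Ψ (θ s ω) (U (θ s ω) ∩ V) = Ψ ω (U ω ∩ (· - s) ⁻¹' V) := by
  have hUω : MeasurableSet (U ω) := measurable_prodMk_left hU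
  rw [hΨa.eq_shiftMeasure, shiftMeasure, hUa,
    Measure.map_apply (measurable_sub_const s) ((measurable_add_const s hUω).inter hV)]
  congr 1
  ext x
  simp

theorem FlowAdaptedKernel.swap {F : Ω → Rd d → Rd d → ℝ} (hF : FlowAdaptedKernel θ F) :
    FlowAdaptedKernel θ fun ω x ξ => F ω ξ x :=
  ⟨hF.1.comp (measurable_fst.prodMk (measurable_snd.snd.prodMk measurable_snd.fst)),
    fun ω s x ξ => hF.2 ω s ξ x⟩

section MassTransport

variable {Φ Ψ : Ω → Measure (Rd d)}

theorem lintegral_lintegral_prod_tsum {ι : Type*} [Countable ι] (hΦ : IsRandomMeasure Φ)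
    (hΨ : IsRandomMeasure Ψ) {H : ι → Ω → Rd d × Rd d → ℝ≥0∞}
    (hH : ∀ i, Measurable (uncurry (H i))) :
    ∫⁻ ω, ∫⁻ p, ∑' i, H i ω p ∂(Φ ω).prod (Ψ ω) ∂P
      = ∑' i, ∫⁻ ω, ∫⁻ p, H i ω p ∂(Φ ω).prod (Ψ ω) ∂P := by
  rw [← lintegral_tsum fun i => (hΦ.measurable_lintegral_prod hΨ (hH i)).aemeasurable]
  exact lintegral_congr fun ω => lintegral_tsum fun i => (hH i).of_uncurry_left.aemeasurable

theorem lintegral_lintegral_prod_comp_shift (hΦ : IsRandomMeasure Φ) (hΨ : IsRandomMeasure Ψ)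
    (hΦa : FlowAdaptedMeasure θ Φ) (hΨa : FlowAdaptedMeasure θ Ψ) (hflow : IsMeasurableFlow θ)
    (hinv : IsFlowInvariant θ P) {H : Ω → Rd d × Rd d → ℝ≥0∞} (hH : Measurable (uncurry H))
    (s : Rd d) :
    ∫⁻ ω, ∫⁻ p, H (θ s ω) (p.1 - s, p.2 - s) ∂(Φ ω).prod (Ψ ω) ∂P
      = ∫⁻ ω, ∫⁻ p, H ω p ∂(Φ ω).prod (Ψ ω) ∂P := by
  rw [← hinv.lintegral_comp hflow s (hΦ.measurable_lintegral_prod hΨ hH)]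
  refine lintegral_congr fun ω => ?_
  have := (hΦ.2 ω).sigmaFinite
  have := (hΨ.2 ω).sigmaFinite
  rw [hΦa.eq_shiftMeasure, hΨa.eq_shiftMeasure, shiftMeasure, shiftMeasure,
    Measure.map_prod_map _ _ (measurable_sub_const s) (measurable_sub_const s),
    lintegral_map hH.of_uncurry_left ((measurable_sub_const s).prodMap (measurable_sub_const s))]
  rfl

/-- The mass transport principle. The proof inserts `∑ v, 1_D (ξ + v) = 1`, moves the `v`-th
term by the flow `θ (-v)`, and removes `∑ v, 1_D (x - v) = 1`. -/
theorem lintegral_setLIntegral_comm_of_flowAdapted (hΦ : IsRandomMeasure Φ)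
    (hΨ : IsRandomMeasure Ψ) (hΦa : FlowAdaptedMeasure θ Φ) (hΨa : FlowAdaptedMeasure θ Ψ)
    (hflow : IsMeasurableFlow θ) (hinv : IsFlowInvariant θ P) (L : Submodule ℤ (Rd d))
    [Countable L] {D : Set (Rd d)} (hDm : MeasurableSet D) (hD : ∀ x, ∃! v : L, v +ᵥ x ∈ D)
    {T : Ω → Rd d → Rd d → ℝ≥0∞} (hT : Measurable fun p : Ω × Rd d × Rd d => T p.1 p.2.1 p.2.2)
    (hTa : ∀ ω s x ξ, T (θ s ω) x ξ = T ω (x + s) (ξ + s)) :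
    ∫⁻ ω, ∫⁻ x in D, ∫⁻ ξ, T ω x ξ ∂Ψ ω ∂Φ ω ∂P = ∫⁻ ω, ∫⁻ ξ in D, ∫⁻ x, T ω x ξ ∂Φ ω ∂Ψ ω ∂P := by
  set I := D.indicator (1 : Rd d → ℝ≥0∞)
  have hI : Measurable I := measurable_const.indicator hDm
  have hsum (x : Rd d) : ∑' v : L, I (x + v) = 1 := by
    simp_rw [add_comm x]
    exact tsum_indicator_vadd_eq_one hD x
  have hsum_neg (x : Rd d) : ∑' v : L, I (x - v) = 1 := by
    simpa [sub_eq_add_neg] using ((Equiv.neg L).tsum_eq fun w => I (x + w)).trans (hsum x)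
  have hTω (ω : Ω) : Measurable (uncurry (T ω)) := hT.comp (measurable_const.prodMk measurable_id)
  have hH₁ (v : Rd d) : Measurable (uncurry fun ω (p : Rd d × Rd d) =>
      I p.1 * I (p.2 + v) * T ω p.1 p.2) := by
    fun_prop
  have hH₂ (v : Rd d) : Measurable (uncurry fun ω (p : Rd d × Rd d) =>
      I (p.1 - v) * I p.2 * T ω p.1 p.2) := by
    fun_prop
  calc ∫⁻ ω, ∫⁻ x in D, ∫⁻ ξ, T ω x ξ ∂Ψ ω ∂Φ ω ∂P
      = ∫⁻ ω, ∫⁻ p, ∑' v : L, I p.1 * I (p.2 + v) * T ω p.1 p.2 ∂(Φ ω).prod (Ψ ω) ∂P := by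
        refine lintegral_congr fun ω => ?_
        have := (hΨ.2 ω).sigmaFinite
        simp_rw [setLIntegral_lintegral_eq_lintegral_prod hDm (hTω ω), ENNReal.tsum_mul_right,
          ENNReal.tsum_mul_left, hsum, mul_one]
        rfl
    _ = ∑' v : L, ∫⁻ ω, ∫⁻ p, I p.1 * I (p.2 + v) * T ω p.1 p.2 ∂(Φ ω).prod (Ψ ω) ∂P :=
        lintegral_lintegral_prod_tsum hΦ hΨ fun v => hH₁ v
    _ = ∑' v : L, ∫⁻ ω, ∫⁻ p, I (p.1 - v) * I p.2 * T ω p.1 p.2 ∂(Φ ω).prod (Ψ ω) ∂P := by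
        refine tsum_congr fun v => ?_
        rw [← lintegral_lintegral_prod_comp_shift hΦ hΨ hΦa hΨa hflow hinv (hH₂ v) (-v)]
        simp [hTa]
    _ = ∫⁻ ω, ∫⁻ p, ∑' v : L, I (p.1 - v) * I p.2 * T ω p.1 p.2 ∂(Φ ω).prod (Ψ ω) ∂P :=
        (lintegral_lintegral_prod_tsum hΦ hΨ fun v : L => hH₂ v).symm
    _ = ∫⁻ ω, ∫⁻ ξ in D, ∫⁻ x, T ω x ξ ∂Φ ω ∂Ψ ω ∂P := by
        refine lintegral_congr fun ω => ?_
        have := (hΦ.2 ω).sigmaFinite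
        have := (hΨ.2 ω).sigmaFinite
        simp_rw [setLIntegral_lintegral_eq_lintegral_prod_symm hDm (hTω ω), ENNReal.tsum_mul_right,
          hsum_neg, one_mul]
        rfl

end MassTransport

section Vanishing

variable {Ψ : Ω → Measure (Rd d)} {U : Ω → Set (Rd d)}

theorem ae_measure_inter_ball_eq_zero_of_ae_ne_top (hd : 0 < d) [IsFiniteMeasure P]
    (hΨ : IsRandomMeasure Ψ) (hΨa : FlowAdaptedMeasure θ Ψ) (hflow : IsMeasurableFlow θ)
    (hinv : IsFlowInvariant θ P) (hU : MeasurableSet {p : Ω × Rd d | p.2 ∈ U p.1})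
    (hUa : ∀ ω s, U (θ s ω) = (· + s) ⁻¹' U ω) (hfin : ∀ᵐ ω ∂P, Ψ ω (U ω) ≠ ∞) (r : ℝ) :
    ∀ᵐ ω ∂P, Ψ ω (U ω ∩ ball 0 r) = 0 := by
  -- truncated at `1` so that dominated convergence applies
  set G : Rd d → Ω → ℝ≥0∞ := fun c ω => min (Ψ ω (U ω ∩ ball c r)) 1
  have hG (c : Rd d) : Measurable (G c) :=
    (hΨ.measurable_measure_prodMk_left (hU.inter (measurable_snd measurableSet_ball))).min
      measurable_const
  have hG_const (c : Rd d) : ∫⁻ ω, G c ω ∂P = ∫⁻ ω, G 0 ω ∂P := by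
    rw [← hinv.lintegral_comp hflow c (hG 0)]
    congr with ω
    simp only [G]
    rw [hΨa.measure_flow_inter hU hUa ω c measurableSet_ball,
      show (· - c) ⁻¹' ball (0 : Rd d) r = ball c r by ext x; simp [dist_eq_norm]]
  have : Nonempty (Fin d) := ⟨⟨0, hd⟩⟩
  choose c hc using fun n : ℕ => exists_norm_eq (Rd d) (by positivity : (0 : ℝ) ≤ n + |r|)
  have hlim : Tendsto (fun n => ∫⁻ ω, G (c n) ω ∂P) atTop (𝓝 0) := by
    refine (tendsto_lintegral_of_dominated_convergence (f := 0) 1 (fun n => hG _)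
      (fun n => ae_of_all _ fun ω => min_le_right _ _) (by simp) ?_).trans (by simp)
    filter_upwards [hfin] with ω hω
    have : IsFiniteMeasure ((Ψ ω).restrict (U ω)) := ⟨by simpa using hω.lt_top⟩
    refine tendsto_of_tendsto_of_tendsto_of_le_of_le tendsto_const_nhds
      (tendsto_measure_ball_of_norm_ge (μ := (Ψ ω).restrict (U ω)) (r := r)
        fun n => by rw [hc n]; linarith [le_abs_self r])
      (fun _ => zero_le) fun n => ?_
    simp only [G, Set.inter_comm (U ω)]
    exact (min_le_left _ _).trans (Measure.le_restrict_apply _ _)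
  have h0 : ∫⁻ ω, G 0 ω ∂P = 0 :=
    tendsto_nhds_unique (by simp only [hG_const]; exact tendsto_const_nhds) hlim
  filter_upwards [(lintegral_eq_zero_iff (hG 0)).1 h0] with ω hω
  simpa [G] using hω

theorem ae_measure_eq_zero_of_ae_ne_top (hd : 0 < d) [IsFiniteMeasure P]
    (hΨ : IsRandomMeasure Ψ) (hΨa : FlowAdaptedMeasure θ Ψ) (hflow : IsMeasurableFlow θ)
    (hinv : IsFlowInvariant θ P) (hU : MeasurableSet {p : Ω × Rd d | p.2 ∈ U p.1})
    (hUa : ∀ ω s, U (θ s ω) = (· + s) ⁻¹' U ω) (hfin : ∀ᵐ ω ∂P, Ψ ω (U ω) ≠ ∞) :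
    ∀ᵐ ω ∂P, Ψ ω (U ω) = 0 := by
  have hball := fun n : ℕ =>
    ae_measure_inter_ball_eq_zero_of_ae_ne_top hd hΨ hΨa hflow hinv hU hUa hfin n
  filter_upwards [ae_all_iff.2 hball] with ω hω
  rw [← Set.inter_univ (U ω), ← iUnion_ball_nat 0, Set.inter_iUnion]
  exact measure_iUnion_null hω

end Vanishing

section Unsated

variable {Φ Ψ : Ω → Measure (Rd d)} {F : Ω → Rd d → Rd d → ℝ}

theorem measurableSet_unsated (hΦ : IsRandomMeasure Φ) (hF : FlowAdaptedKernel θ F) :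
    MeasurableSet {p : Ω × Rd d | Unsated (Φ p.1) (F p.1) p.2} :=
  have hm : Measurable fun q : (Ω × Rd d) × Rd d => ENNReal.ofReal (F q.1.1 q.2 q.1.2) :=
    (hF.1.comp (measurable_fst.fst.prodMk (measurable_snd.prodMk measurable_fst.snd))).ennreal_ofReal
  measurableSet_lt (hΦ.measurable_lintegral measurable_fst hm) measurable_const

theorem unsated_flow_iff (hΦa : FlowAdaptedMeasure θ Φ) (hF : FlowAdaptedKernel θ F) (ω : Ω)
    (s ξ : Rd d) : Unsated (Φ (θ s ω)) (F (θ s ω)) ξ ↔ Unsated (Φ ω) (F ω) (ξ + s) := by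
  have hm : Measurable fun x => ENNReal.ofReal (F (θ s ω) x ξ) :=
    (hF.1.comp (measurable_const.prodMk (measurable_id.prodMk measurable_const))).ennreal_ofReal
  rw [Unsated, hΦa.eq_shiftMeasure, shiftMeasure, lintegral_map hm (measurable_sub_const s)]
  simp only [hF.2, sub_add_cancel, Unsated]

theorem intensity_le_of_ae_unsated_null (hΦ : IsRandomMeasure Φ) (hΨ : IsRandomMeasure Ψ)
    (hΦa : FlowAdaptedMeasure θ Φ) (hΨa : FlowAdaptedMeasure θ Ψ) (hflow : IsMeasurableFlow θ)
    (hinv : IsFlowInvariant θ P) {lamΦ lamΨ : ℝ≥0∞} (hΦi : HasIntensity P Φ lamΦ)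
    (hΨi : HasIntensity P Ψ lamΨ) (hF : FlowAdaptedKernel θ F)
    (hsub : ∀ᵐ ω ∂P, ∀ x, ∫⁻ ξ, ENNReal.ofReal (F ω x ξ) ∂Ψ ω ≤ 1)
    (hnull : ∀ᵐ ω ∂P, Ψ ω {ξ | Unsated (Φ ω) (F ω) ξ} = 0) : lamΨ ≤ lamΦ := by
  set b := (EuclideanSpace.basisFun (Fin d) ℝ).toBasis
  set D := ZSpan.fundamentalDomain b
  have hDm : MeasurableSet D := ZSpan.fundamentalDomain_measurableSet b
  have hD0 : volume D ≠ 0 := ZSpan.measure_fundamentalDomain_ne_zero b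
  have hDtop : volume D ≠ ∞ := (ZSpan.fundamentalDomain_isBounded b).measure_lt_top.ne
  refine (ENNReal.mul_le_mul_iff_left hD0 hDtop).1 ?_
  rw [← hΦi D hDm, ← hΨi D hDm]
  calc ∫⁻ ω, Ψ ω D ∂P
      ≤ ∫⁻ ω, ∫⁻ ξ in D, ∫⁻ x, ENNReal.ofReal (F ω x ξ) ∂Φ ω ∂Ψ ω ∂P := by
        refine lintegral_mono_ae (hnull.mono fun ω hω => ?_)
        rw [← setLIntegral_one]
        exact lintegral_mono_ae (ae_restrict_of_ae
          ((measure_eq_zero_iff_ae_notMem.1 hω).mono fun ξ hξ => not_lt.1 hξ))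
    _ = ∫⁻ ω, ∫⁻ x in D, ∫⁻ ξ, ENNReal.ofReal (F ω x ξ) ∂Ψ ω ∂Φ ω ∂P :=
        (lintegral_setLIntegral_comm_of_flowAdapted hΦ hΨ hΦa hΨa hflow hinv
          (Submodule.span ℤ (Set.range b)) hDm (ZSpan.exist_unique_vadd_mem_fundamentalDomain b)
          (T := fun ω x ξ => ENNReal.ofReal (F ω x ξ)) hF.1.ennreal_ofReal
          fun ω s x ξ => by rw [hF.2]).symm
    _ ≤ ∫⁻ ω, Φ ω D ∂P := lintegral_mono_ae (hsub.mono fun ω hω =>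
        (lintegral_mono fun x => hω x).trans (setLIntegral_one D).le)

end Unsated

theorem ae_unexhausted_null_and_unsated_top (hd : 0 < d) [IsProbabilityMeasure P]
    (hflow : IsMeasurableFlow θ) (hinv : IsFlowInvariant θ P) (herg : IsErgodicFlow θ P)
    {Φ Ψ : Ω → Measure (Rd d)} (hΦ : IsRandomMeasure Φ) (hΨ : IsRandomMeasure Ψ)
    (hΦa : FlowAdaptedMeasure θ Φ) (hΨa : FlowAdaptedMeasure θ Ψ) {lamΦ lamΨ : ℝ≥0∞}
    (hΦi : HasIntensity P Φ lamΦ) (hΨi : HasIntensity P Ψ lamΨ) {F : Ω → Rd d → Rd d → ℝ}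
    (hF : FlowAdaptedKernel θ F) (hstab : ∀ᵐ ω ∂P, IsStableDensity (Φ ω) (Ψ ω) (F ω))
    (hlt : lamΦ < lamΨ) :
    ∀ᵐ ω ∂P, Φ ω {x | Unexhausted (Ψ ω) (F ω) x} = 0 ∧
      Ψ ω {ξ | Unsated (Φ ω) (F ω) ξ} = ∞ := by
  set U : Ω → Set (Rd d) := fun ω => {ξ | Unsated (Φ ω) (F ω) ξ}
  have hU : MeasurableSet {p : Ω × Rd d | p.2 ∈ U p.1} := measurableSet_unsated hΦ hF
  have hUa (ω : Ω) (s : Rd d) : U (θ s ω) = (· + s) ⁻¹' U ω :=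
    Set.ext (unsated_flow_iff hΦa hF ω s)
  have hg : Measurable fun ω => Ψ ω (U ω) := hΨ.measurable_measure_prodMk_left hU
  have hg_inv (s : Rd d) (ω : Ω) : Ψ (θ s ω) (U (θ s ω)) = Ψ ω (U ω) := by
    simpa using hΨa.measure_flow_inter hU hUa ω s MeasurableSet.univ
  have hpos : ∀ᵐ ω ∂P, ¬ Ψ ω (U ω) = 0 := by
    refine (herg.ae_or_ae_not (p := fun ω => Ψ ω (U ω) = 0) (hg (measurableSet_singleton 0))
      fun s ω => by rw [hg_inv]).resolve_left fun hnull => hlt.not_ge ?_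
    exact intensity_le_of_ae_unsated_null hΦ hΨ hΦa hΨa hflow hinv hΦi hΨi hF
      (hstab.mono fun _ h => h.1.1.2.2.1) hnull
  have htop : ∀ᵐ ω ∂P, ¬ Ψ ω (U ω) ≠ ∞ := by
    refine (herg.ae_or_ae_not (p := fun ω => Ψ ω (U ω) ≠ ∞) (hg (measurableSet_singleton ∞)).compl
      fun s ω => by rw [hg_inv]).resolve_left fun hfin => ?_
    obtain ⟨ω, hzero, hne⟩ :=
      ((ae_measure_eq_zero_of_ae_ne_top hd hΨ hΨa hflow hinv hU hUa hfin).and hpos).exists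
    exact hne hzero
  filter_upwards [hstab, htop] with ω hs hω
  rw [not_ne_iff] at hω
  have hempty : {x | Unexhausted (Ψ ω) (F ω) x} = ∅ :=
    Set.eq_empty_of_forall_notMem (hs.not_unexhausted_of_measure_unsated_eq_top hω)
  exact ⟨by rw [hempty, measure_empty], hω⟩

end RandomMeasures

theorem stmt5_general {Ω : Type*} [MeasurableSpace Ω] {d : ℕ} (hd : 0 < d)
    (P : Measure Ω) [IsProbabilityMeasure P]
    (θ : Rd d → Ω → Ω) (hflow : IsMeasurableFlow θ) (hinv : IsFlowInvariant θ P)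
    (herg : IsErgodicFlow θ P)
    (Φ Ψ : Ω → Measure (Rd d)) (hΦ : IsRandomMeasure Φ) (hΨ : IsRandomMeasure Ψ)
    (hΦa : FlowAdaptedMeasure θ Φ) (hΨa : FlowAdaptedMeasure θ Ψ)
    (lamΦ lamΨ : ℝ≥0∞)
    (hΦi : HasIntensity P Φ lamΦ) (hΨi : HasIntensity P Ψ lamΨ)
    (F : Ω → Rd d → Rd d → ℝ) (hF : FlowAdaptedKernel θ F)
    (hstab : ∀ᵐ ω ∂P, IsStableDensity (Φ ω) (Ψ ω) (F ω)) :
    (lamΦ < lamΨ → ∀ᵐ ω ∂P, Φ ω {x | Unexhausted (Ψ ω) (F ω) x} = 0 ∧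
      Ψ ω {ξ | Unsated (Φ ω) (F ω) ξ} = ⊤) ∧
    (lamΨ < lamΦ → ∀ᵐ ω ∂P, Ψ ω {ξ | Unsated (Φ ω) (F ω) ξ} = 0 ∧
      Φ ω {x | Unexhausted (Ψ ω) (F ω) x} = ⊤) :=
  ⟨ae_unexhausted_null_and_unsated_top hd hflow hinv herg hΦ hΨ hΦa hΨa hΦi hΨi hF hstab,
    ae_unexhausted_null_and_unsated_top hd hflow hinv herg hΨ hΦ hΨa hΦa hΨi hΦi hF.swap
      (hstab.mono fun _ h => h.swap)⟩

/-- The unequal-intensity cases of the stable-density theorem. -/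
theorem stmt5 {Ω : Type*} [MeasurableSpace Ω] {d : ℕ} (hd : 0 < d)
    (P : Measure Ω) [IsProbabilityMeasure P]
    (θ : Rd d → Ω → Ω) (hflow : IsMeasurableFlow θ) (hinv : IsFlowInvariant θ P)
    (herg : IsErgodicFlow θ P)
    (Φ Ψ : Ω → Measure (Rd d)) (hΦ : IsRandomMeasure Φ) (hΨ : IsRandomMeasure Ψ)
    (hΦa : FlowAdaptedMeasure θ Φ) (hΨa : FlowAdaptedMeasure θ Ψ)
    (lamΦ lamΨ : ℝ≥0∞) (hlamΦ0 : 0 < lamΦ) (hlamΦtop : lamΦ < ⊤)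
    (hlamΨ0 : 0 < lamΨ) (hlamΨtop : lamΨ < ⊤)
    (hΦi : HasIntensity P Φ lamΦ) (hΨi : HasIntensity P Ψ lamΨ)
    (F : Ω → Rd d → Rd d → ℝ) (hF : FlowAdaptedKernel θ F)
    (hstab : ∀ᵐ ω ∂P, IsStableDensity (Φ ω) (Ψ ω) (F ω)) :
    (lamΦ < lamΨ → ∀ᵐ ω ∂P, Φ ω {x | Unexhausted (Ψ ω) (F ω) x} = 0 ∧
      Ψ ω {ξ | Unsated (Φ ω) (F ω) ξ} = ⊤) ∧
    (lamΨ < lamΦ → ∀ᵐ ω ∂P, Ψ ω {ξ | Unsated (Φ ω) (F ω) ξ} = 0 ∧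
      Φ ω {x | Unexhausted (Ψ ω) (F ω) x} = ⊤) :=
  stmt5_general hd P θ hflow hinv herg Φ Ψ hΦ hΨ hΦa hΨa lamΦ lamΨ hΦi hΨi F hF hstab
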